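/- arXiv:2406.09150 — 2 statements merged into one kernel-verified Lean document; each statement's English description precedes it below -/
import Mathlib

section
/- Let p₀ = p_0, …, p_{j−1} be a finite list of odd integers, each at least 3. For 0 ≤ i < j let ℓ_i be the bit length of ⌊p_i/2⌋ (i.e., ℓ_i = ⌊log₂⌊p_i/2⌋⌋ + 1), let s_i = ℓ_0 + ⋯ + ℓ_{i−1} (with s_0 = 0), and let L = Σ_{i<j} ⌊p_i/2⌋ · 2^{s_i}. Then for every index i < j, one has p_i = 2·((⌊L / 2^{s_i}⌋) mod 2^{ℓ_i}) + 1. -/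
/-- Correctness of the packed-divisor data structure: odd integers `p 0, …, p (j-1)`
(each at least 3) are stored with their trailing 1-bit dropped and concatenated into a
single integer `L`; each `p i` can be recovered by a shift, a mask, and restoring the
trailing bit.  Here `ℓ i = ⌊log₂ ⌊p i / 2⌋⌋ + 1` is the bit length of `⌊p i / 2⌋`,
`s i = ℓ 0 + ⋯ + ℓ (i-1)`, and `L = Σ_{i < j} ⌊p i / 2⌋ · 2 ^ (s i)`. -/
theorem packed_divisor_recovery (j : ℕ) (p : ℕ → ℕ)
    (hp : ∀ i < j, Odd (p i) ∧ 3 ≤ p i)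
    (ℓ s : ℕ → ℕ)
    (hℓ : ∀ i, ℓ i = Nat.log 2 (p i / 2) + 1)
    (hs : ∀ i, s i = ∑ k ∈ Finset.range i, ℓ k)
    (L : ℕ)
    (hL : L = ∑ i ∈ Finset.range j, (p i / 2) * 2 ^ s i) :
    ∀ i < j, p i = 2 * ((L / 2 ^ s i) % 2 ^ ℓ i) + 1 := by
  have hlt : ∀ i, p i / 2 < 2 ^ ℓ i := by
    intro i
    rw [hℓ i]
    exact Nat.lt_pow_succ_log_self (by norm_num) _
  -- sum of first i terms is < 2 ^ s i
  have hA : ∀ i, (∑ k ∈ Finset.range i, (p k / 2) * 2 ^ s k) < 2 ^ s i := by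
    intro i
    induction i with
    | zero => simp [hs]
    | succ n ih =>
      rw [Finset.sum_range_succ]
      have h1 : p n / 2 * 2 ^ s n ≤ (2 ^ ℓ n - 1) * 2 ^ s n :=
        Nat.mul_le_mul_right _ (Nat.le_sub_one_of_lt (hlt n))
      have hsn : s (n + 1) = s n + ℓ n := by
        rw [hs, hs, Finset.sum_range_succ]
      have h2 : 2 ^ s n ≤ 2 ^ ℓ n * 2 ^ s n :=
        Nat.le_mul_of_pos_left _ (Nat.pow_pos two_pos)
      have heq : 2 ^ s n + (2 ^ ℓ n - 1) * 2 ^ s n = 2 ^ (s n + ℓ n) := by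
        rw [Nat.sub_mul, one_mul, pow_add, mul_comm (2 ^ s n) (2 ^ ℓ n)]; omega
      rw [hsn]; omega
  intro i hi
  obtain ⟨hodd, hge⟩ := hp i hi
  -- decompose L
  have hsplit : L = (∑ k ∈ Finset.range i, (p k / 2) * 2 ^ s k)
      + ((p i / 2) * 2 ^ s i + ∑ k ∈ Finset.Ico (i+1) j, (p k / 2) * 2 ^ s k) := by
    rw [hL, Finset.range_eq_Ico,
      ← Finset.sum_Ico_consecutive _ (Nat.zero_le i) (le_of_lt hi),
      Finset.sum_eq_sum_Ico_succ_bot hi, ← Finset.range_eq_Ico]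
  -- the tail is divisible by 2 ^ (s i + ℓ i)
  have hdvd : (2 ^ (s i + ℓ i)) ∣ ∑ k ∈ Finset.Ico (i+1) j, (p k / 2) * 2 ^ s k := by
    apply Finset.dvd_sum
    intro k hk
    apply Dvd.dvd.mul_left
    apply pow_dvd_pow
    have hk1 : i + 1 ≤ k := (Finset.mem_Ico.mp hk).1
    have : s (i + 1) ≤ s k := by
      rw [hs, hs]
      exact Finset.sum_le_sum_of_subset (Finset.range_subset_range.mpr hk1)
    have hsi1 : s (i + 1) = s i + ℓ i := by rw [hs, hs, Finset.sum_range_succ]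
    omega
  obtain ⟨C, hC⟩ := hdvd
  have key : L = (∑ k ∈ Finset.range i, (p k / 2) * 2 ^ s k)
      + (p i / 2 + 2 ^ ℓ i * C) * 2 ^ s i := by
    rw [hsplit, hC, pow_add]; ring
  have hdiv : L / 2 ^ s i = p i / 2 + 2 ^ ℓ i * C := by
    rw [key, Nat.add_mul_div_right _ _ (Nat.pow_pos (by norm_num : 0 < 2)),
      Nat.div_eq_of_lt (hA i), Nat.zero_add]
  have hmod : (L / 2 ^ s i) % 2 ^ ℓ i = p i / 2 := by
    rw [hdiv, Nat.add_mul_mod_self_left, Nat.mod_eq_of_lt (hlt i)]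
  rw [hmod]
  have := Nat.div_add_mod (p i) 2
  have h2 : p i % 2 = 1 := Nat.odd_iff.mp hodd
  omega
end

section
/- There exists a constant C > 0 such that for every real y ≥ 16, the sum of log(q − p) over all pairs (p, q) of consecutive primes with q ≤ y is at most C · y · log log y / log y. (Equivalently: storing the gaps between consecutive primes up to y requires O(y · log log y / log y) bits in total, an average of O(log log y) bits per gap.) -/
open Finset in
lemma cheby (N : ℕ) (hN : 16 ≤ N) :
    (((Finset.range (N+1)).filter Nat.Prime).card : ℝ) * Real.log N ≤ 16 * N := by
  set m := Nat.sqrt N with hm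
  set P := (Finset.range (N+1)).filter Nat.Prime with hP
  set K := P.filter (fun p => m < p) with hK
  have hm4 : 4 ≤ m := by
    have h1 : Nat.sqrt 16 ≤ Nat.sqrt N := Nat.sqrt_le_sqrt hN
    have h2 : Nat.sqrt 16 = 4 := by
      rw [show (16:ℕ) = 4^2 by norm_num, Nat.sqrt_eq']
    omega
  -- pow bound
  have hpow : (m+1)^K.card ≤ 4^N := by
    calc (m+1)^K.card ≤ ∏ p ∈ K, p := by
          apply Finset.pow_card_le_prod
          intro p hp
          simp only [hK, Finset.mem_filter] at hp
          omega
      _ ≤ ∏ p ∈ P, p := by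
          apply Finset.prod_le_prod_of_subset_of_one_le' (Finset.filter_subset _ _)
          intro p hp _
          simp only [hP, Finset.mem_filter] at hp
          exact hp.2.one_lt.le
      _ ≤ 4^N := primorial_le_4_pow N
  have hNR : (16:ℝ) ≤ (N:ℝ) := by exact_mod_cast hN
  have hNpos : (0:ℝ) < (N:ℝ) := by linarith
  have hlogN : 0 ≤ Real.log N := Real.log_nonneg (by linarith)
  have hsq : Real.sqrt N ^ 2 = (N:ℝ) := Real.sq_sqrt hNpos.le
  have hsqrt4 : (4:ℝ) ≤ Real.sqrt N := by
    have h := Real.sqrt_le_sqrt hNR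
    rwa [show (16:ℝ) = 4^2 by norm_num, Real.sqrt_sq (by norm_num)] at h
  have hmR : (m:ℝ) ≤ Real.sqrt N := by
    rw [show (m:ℝ) = Real.sqrt ((m:ℝ)^2) by rw [Real.sqrt_sq (by positivity)]]
    apply Real.sqrt_le_sqrt
    exact_mod_cast Nat.sqrt_le' N
  have hlog_le : Real.log N ≤ 2 * Real.sqrt N := by
    have h1 : Real.log N = 2 * Real.log (Real.sqrt N) := by
      rw [Real.log_sqrt hNpos.le]; ring
    have h2 : Real.log (Real.sqrt N) ≤ Real.sqrt N - 1 :=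
      Real.log_le_sub_one_of_pos (by positivity)
    nlinarith [Real.sqrt_nonneg (N:ℝ)]
  have hm1 : (m:ℝ)+1 ≤ 2 * Real.sqrt N := by nlinarith
  have hlogm : Real.log N ≤ 2 * Real.log ((m:ℝ)+1) := by
    have hlt : (N:ℝ) ≤ ((m:ℝ)+1)^2 := by
      have h1 := (Nat.cast_lt (α := ℝ)).mpr (Nat.lt_succ_sqrt' N)
      push_cast at h1
      linarith [h1]
    calc Real.log N ≤ Real.log (((m:ℝ)+1)^2) := Real.log_le_log hNpos hlt
      _ = 2 * Real.log ((m:ℝ)+1) := by rw [Real.log_pow]; push_cast; ring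
  have hKlog : (K.card:ℝ) * Real.log ((m:ℝ)+1) ≤ (N:ℝ) * Real.log 4 := by
    have hc : (((m+1:ℕ):ℝ))^K.card ≤ (4:ℝ)^N := by exact_mod_cast hpow
    have hlog := Real.log_le_log (by positivity) hc
    rw [Real.log_pow, Real.log_pow] at hlog
    push_cast at hlog ⊢
    linarith
  have hcard : P.card ≤ (m+1) + K.card := by
    have hsplit := Finset.card_filter_add_card_filter_not
      (s := P) (p := fun p => m < p)
    rw [← hK] at hsplit
    simp only [not_lt] at hsplit
    have h2 : (P.filter (fun p => p ≤ m)).card ≤ m+1 := by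
      have hsub : P.filter (fun p => p ≤ m) ⊆ Finset.range (m+1) := by
        intro p hp
        simp only [Finset.mem_filter, not_lt] at hp
        simp [Nat.lt_succ_iff, hp.2]
      simpa using Finset.card_le_card hsub
    omega
  have hcardR : (P.card : ℝ) ≤ ((m:ℝ)+1) + K.card := by exact_mod_cast hcard
  have hlog4 : Real.log 4 ≤ 3 := by
    nlinarith [Real.log_le_sub_one_of_pos (show (0:ℝ) < 4 by norm_num)]
  have hKnn : (0:ℝ) ≤ (K.card:ℝ) := by positivity
  have hlogm1nn : (0:ℝ) ≤ Real.log ((m:ℝ)+1) := Real.log_nonneg (by linarith [show (0:ℝ) ≤ (m:ℝ) from Nat.cast_nonneg m])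
  have h2s : (0:ℝ) ≤ 2 * Real.sqrt N := by positivity
  nlinarith [mul_le_mul_of_nonneg_right hcardR hlogN,
    mul_le_mul_of_nonneg_left hlogm hKnn,
    mul_le_mul_of_nonneg_right hm1 hlogN,
    mul_le_mul_of_nonneg_left hlog_le h2s,
    Real.sqrt_nonneg (N:ℝ), hKlog]

lemma main_aux (y : ℝ) (hy : 16 ≤ y) (P : Finset (ℕ × ℕ))
    (hP : ∀ pq ∈ P, pq.1.Prime ∧ pq.2.Prime ∧ pq.1 < pq.2 ∧ pq.2 ≤ ⌊y⌋₊ ∧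
      ∀ r : ℕ, pq.1 < r → r < pq.2 → ¬ r.Prime) :
    ∑ pq ∈ P, Real.log ((pq.2 - pq.1 : ℕ) : ℝ)
      ≤ 100 * y * Real.log (Real.log y) / Real.log y := by
  classical
  set N := ⌊y⌋₊ with hNdef
  have hN16 : 16 ≤ N := Nat.le_floor (by exact_mod_cast hy)
  have hy0 : (0:ℝ) < y := by linarith
  have hNy : (N:ℝ) ≤ y := Nat.floor_le hy0.le
  have hNR : (16:ℝ) ≤ (N:ℝ) := by exact_mod_cast hN16
  have hlogy : 0 < Real.log y := Real.log_pos (by linarith)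
  -- log N ≥ (1/2) log y
  have hsqy : Real.sqrt y * Real.sqrt y = y := Real.mul_self_sqrt hy0.le
  have hsqy4 : (4:ℝ) ≤ Real.sqrt y := by
    have h := Real.sqrt_le_sqrt hy
    rwa [show (16:ℝ) = 4^2 by norm_num, Real.sqrt_sq (by norm_num)] at h
  have hsqrty_le : Real.sqrt y ≤ (N:ℝ) := by
    have h1 : y - 1 ≤ (N:ℝ) := by linarith [Nat.lt_floor_add_one y]
    nlinarith
  have hlogN : Real.log y / 2 ≤ Real.log N := by
    rw [← Real.log_sqrt hy0.le]
    exact Real.log_le_log (Real.sqrt_pos.mpr hy0) hsqrty_le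
  have hlogN_le : Real.log (N:ℝ) ≤ Real.log y :=
    Real.log_le_log (by linarith) hNy
  -- log log y ≥ 1
  have hll1 : 1 ≤ Real.log (Real.log y) := by
    have h16 : Real.log 16 ≤ Real.log y := Real.log_le_log (by norm_num) hy
    have h2 : Real.log 16 = 4 * Real.log 2 := by
      rw [show (16:ℝ) = 2^4 by norm_num, Real.log_pow]; push_cast; ring
    have hexp : Real.exp 1 ≤ Real.log y := by
      nlinarith [Real.exp_one_lt_d9, Real.log_two_gt_d9]
    calc (1:ℝ) = Real.log (Real.exp 1) := (Real.log_exp 1).symm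
      _ ≤ Real.log (Real.log y) := Real.log_le_log (Real.exp_pos 1) hexp
  -- basic facts about pairs
  have hgap1 : ∀ pq ∈ P, (1:ℝ) ≤ ((pq.2 - pq.1 : ℕ) : ℝ) := by
    intro pq hpq
    obtain ⟨_, _, hlt, _, _⟩ := hP pq hpq
    have : 1 ≤ pq.2 - pq.1 := by omega
    exact_mod_cast this
  have hgapy : ∀ pq ∈ P, ((pq.2 - pq.1 : ℕ) : ℝ) ≤ y := by
    intro pq hpq
    obtain ⟨_, _, hlt, hle, _⟩ := hP pq hpq
    have h1 : pq.2 - pq.1 ≤ N := by omega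
    have : ((pq.2 - pq.1 : ℕ):ℝ) ≤ (N:ℝ) := by exact_mod_cast h1
    linarith
  -- injectivity of snd on P and card bound
  have hcardP : (P.card : ℝ) * Real.log y ≤ 32 * y := by
    have hinj : P.card ≤ ((Finset.range (N+1)).filter Nat.Prime).card := by
      apply Finset.card_le_card_of_injOn (fun pq => pq.2)
      · intro pq hpq
        obtain ⟨_, hq, _, hle, _⟩ := hP pq hpq
        simp only [Finset.mem_coe, Finset.mem_filter, Finset.mem_range]
        exact ⟨by omega, hq⟩
      · intro a ha b hb hab
        simp only at hab
        obtain ⟨hap, haq, halt, hale, hanop⟩ := hP a ha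
        obtain ⟨hbp, hbq, hblt, hble, hbnop⟩ := hP b hb
        have : a.1 = b.1 := by
          rcases lt_trichotomy a.1 b.1 with h | h | h
          · exact absurd hbp (hanop b.1 h (by omega))
          · exact h
          · exact absurd hap (hbnop a.1 h (by omega))
        exact Prod.ext this hab
    have hch := cheby N hN16
    have h1 : (P.card : ℝ) ≤ (((Finset.range (N+1)).filter Nat.Prime).card : ℝ) := by
      exact_mod_cast hinj
    have hc0 : (0:ℝ) ≤ (((Finset.range (N+1)).filter Nat.Prime).card : ℝ) := by positivity
    nlinarith [mul_le_mul_of_nonneg_left hlogN hc0]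
  -- sum of gaps
  have hsumgap : ∑ pq ∈ P, ((pq.2 - pq.1 : ℕ) : ℝ) ≤ 2 * y := by
    have hdisj : ∀ a ∈ P, ∀ b ∈ P, a ≠ b →
        Disjoint (Finset.Ioc a.1 a.2) (Finset.Ioc b.1 b.2) := by
      intro a ha b hb hne
      obtain ⟨hap, haq, halt, hale, hanop⟩ := hP a ha
      obtain ⟨hbp, hbq, hblt, hble, hbnop⟩ := hP b hb
      have key : ∀ (u v : ℕ × ℕ), u.1 < u.2 → v.1 < v.2 → u.2 < v.2 →
          (∀ r : ℕ, v.1 < r → r < v.2 → ¬ r.Prime) → u.2.Prime →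
          Disjoint (Finset.Ioc u.1 u.2) (Finset.Ioc v.1 v.2) := by
        intro u v hu hv huv hnop hup
        have h1 : u.2 ≤ v.1 := by
          by_contra h
          exact hnop u.2 (by omega) huv hup
        rw [Finset.disjoint_left]
        intro x hx hx'
        simp only [Finset.mem_Ioc] at hx hx'
        omega
      rcases lt_trichotomy a.2 b.2 with h | h | h
      · exact key a b halt hblt h hbnop haq
      · exfalso
        apply hne
        have h1 : a.1 = b.1 := by
          rcases lt_trichotomy a.1 b.1 with h' | h' | h'
          · exact absurd hbp (hanop b.1 h' (by omega))
          · exact h'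
          · exact absurd hap (hbnop a.1 h' (by omega))
        exact Prod.ext h1 h
      · exact (key b a hblt halt h hanop hbq).symm
    have heq : ∑ pq ∈ P, (pq.2 - pq.1) = (P.biUnion (fun pq => Finset.Ioc pq.1 pq.2)).card := by
      rw [Finset.card_biUnion hdisj]
      simp [Nat.card_Ioc]
    have hsub : P.biUnion (fun pq => Finset.Ioc pq.1 pq.2) ⊆ Finset.range (N+1) := by
      intro x hx
      simp only [Finset.mem_biUnion] at hx
      obtain ⟨pq, hpq, hxmem⟩ := hx
      obtain ⟨_, _, _, hle, _⟩ := hP pq hpq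
      simp only [Finset.mem_Ioc] at hxmem
      simp only [Finset.mem_range]
      omega
    have h1 : ∑ pq ∈ P, (pq.2 - pq.1) ≤ N + 1 := by
      rw [heq]
      calc (P.biUnion (fun pq => Finset.Ioc pq.1 pq.2)).card
          ≤ (Finset.range (N+1)).card := Finset.card_le_card hsub
        _ = N + 1 := Finset.card_range _
    have h2 : (∑ pq ∈ P, ((pq.2 - pq.1 : ℕ):ℝ)) ≤ ((N:ℝ) + 1) := by
      have := (Nat.cast_le (α := ℝ)).mpr h1
      push_cast at this
      linarith
    linarith
  -- split into small and big gaps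
  set L : ℝ := (Real.log y)^2 with hLdef
  have hLpos : 0 < L := by positivity
  set Ps := P.filter (fun pq => ((pq.2 - pq.1 : ℕ) : ℝ) ≤ L) with hPs
  set Pb := P.filter (fun pq => ¬ ((pq.2 - pq.1 : ℕ) : ℝ) ≤ L) with hPb
  have hsplit : ∑ pq ∈ P, Real.log ((pq.2 - pq.1 : ℕ) : ℝ)
      = ∑ pq ∈ Ps, Real.log ((pq.2 - pq.1 : ℕ) : ℝ)
        + ∑ pq ∈ Pb, Real.log ((pq.2 - pq.1 : ℕ) : ℝ) :=
    (Finset.sum_filter_add_sum_filter_not P _ _).symm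
  -- small gaps
  have hsmall : ∑ pq ∈ Ps, Real.log ((pq.2 - pq.1 : ℕ) : ℝ)
      ≤ (P.card : ℝ) * (2 * Real.log (Real.log y)) := by
    have hb : ∀ pq ∈ Ps, Real.log ((pq.2 - pq.1 : ℕ) : ℝ) ≤ 2 * Real.log (Real.log y) := by
      intro pq hpq
      rw [hPs, Finset.mem_filter] at hpq
      obtain ⟨hpqP, hle⟩ := hpq
      calc Real.log ((pq.2 - pq.1 : ℕ) : ℝ)
          ≤ Real.log L := Real.log_le_log (by linarith [hgap1 pq hpqP]) hle
        _ = 2 * Real.log (Real.log y) := by rw [hLdef, Real.log_pow]; push_cast; ring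
    calc ∑ pq ∈ Ps, Real.log ((pq.2 - pq.1 : ℕ) : ℝ)
        ≤ (Ps.card : ℝ) * (2 * Real.log (Real.log y)) := by
          have := Finset.sum_le_card_nsmul Ps _ _ hb
          simpa [nsmul_eq_mul] using this
      _ ≤ (P.card : ℝ) * (2 * Real.log (Real.log y)) := by
          apply mul_le_mul_of_nonneg_right
          · exact_mod_cast Finset.card_le_card (Finset.filter_subset _ _)
          · linarith
  -- big gaps
  have hbigcard : (Pb.card : ℝ) * L ≤ 2 * y := by
    have h1 : (Pb.card : ℝ) * L ≤ ∑ pq ∈ Pb, ((pq.2 - pq.1 : ℕ) : ℝ) := by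
      have := Finset.card_nsmul_le_sum Pb (fun pq => ((pq.2 - pq.1 : ℕ) : ℝ)) L
        (fun pq hpq => by
          rw [hPb, Finset.mem_filter] at hpq
          linarith [hpq.2])
      simpa [nsmul_eq_mul] using this
    have h2 : ∑ pq ∈ Pb, ((pq.2 - pq.1 : ℕ) : ℝ) ≤ ∑ pq ∈ P, ((pq.2 - pq.1 : ℕ) : ℝ) := by
      apply Finset.sum_le_sum_of_subset_of_nonneg (Finset.filter_subset _ _)
      intro pq hpq _
      positivity
    linarith
  have hbig : (∑ pq ∈ Pb, Real.log ((pq.2 - pq.1 : ℕ) : ℝ)) * Real.log y ≤ 2 * y := by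
    have hb : ∀ pq ∈ Pb, Real.log ((pq.2 - pq.1 : ℕ) : ℝ) ≤ Real.log y := by
      intro pq hpq
      rw [hPb, Finset.mem_filter] at hpq
      exact Real.log_le_log (by linarith [hgap1 pq hpq.1]) (hgapy pq hpq.1)
    have h1 : ∑ pq ∈ Pb, Real.log ((pq.2 - pq.1 : ℕ) : ℝ) ≤ (Pb.card : ℝ) * Real.log y := by
      have := Finset.sum_le_card_nsmul Pb _ _ hb
      simpa [nsmul_eq_mul] using this
    have h2 : (Pb.card : ℝ) * Real.log y * Real.log y ≤ 2 * y := by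
      have : (Pb.card : ℝ) * (Real.log y * Real.log y) = (Pb.card : ℝ) * L := by
        rw [hLdef]; ring
      nlinarith [hbigcard]
    nlinarith [Nat.cast_nonneg (α := ℝ) Pb.card, hlogy]
  -- combine
  rw [le_div_iff₀ hlogy]
  rw [hsplit]
  have hsmall2 : (∑ pq ∈ Ps, Real.log ((pq.2 - pq.1 : ℕ) : ℝ)) * Real.log y
      ≤ 64 * y * Real.log (Real.log y) := by
    calc (∑ pq ∈ Ps, Real.log ((pq.2 - pq.1 : ℕ) : ℝ)) * Real.log y
        ≤ (P.card : ℝ) * (2 * Real.log (Real.log y)) * Real.log y :=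
          mul_le_mul_of_nonneg_right hsmall hlogy.le
      _ = ((P.card : ℝ) * Real.log y) * (2 * Real.log (Real.log y)) := by ring
      _ ≤ (32 * y) * (2 * Real.log (Real.log y)) :=
          mul_le_mul_of_nonneg_right hcardP (by linarith)
      _ = 64 * y * Real.log (Real.log y) := by ring
  have hbig2 : (∑ pq ∈ Pb, Real.log ((pq.2 - pq.1 : ℕ) : ℝ)) * Real.log y
      ≤ 2 * y * Real.log (Real.log y) := by
    have h := mul_nonneg (by linarith : (0:ℝ) ≤ 2*y) (by linarith : (0:ℝ) ≤ Real.log (Real.log y) - 1)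
    linarith
  have h := mul_nonneg hy0.le (by linarith : (0:ℝ) ≤ Real.log (Real.log y))
  linarith

open Classical in
/-- There is a constant `C > 0` such that for every real `y ≥ 16`, the sum of
`log (q − p)` over all pairs `(p, q)` of consecutive primes with `q ≤ y` is at most
`C · y · log log y / log y`. -/
theorem sum_log_prime_gaps_le :
    ∃ C : ℝ, 0 < C ∧ ∀ y : ℝ, 16 ≤ y →
      ∑ pq ∈ (Finset.range (⌊y⌋₊ + 1) ×ˢ Finset.range (⌊y⌋₊ + 1)).filter
          (fun pq => pq.1.Prime ∧ pq.2.Prime ∧ pq.1 < pq.2 ∧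
            ∀ r : ℕ, pq.1 < r → r < pq.2 → ¬ r.Prime),
        Real.log ((pq.2 - pq.1 : ℕ) : ℝ)
      ≤ C * y * Real.log (Real.log y) / Real.log y := by
  refine ⟨100, by norm_num, fun y hy => ?_⟩
  apply main_aux y hy
  intro pq hpq
  simp only [Finset.mem_filter, Finset.mem_product, Finset.mem_range] at hpq
  exact ⟨hpq.2.1, hpq.2.2.1, hpq.2.2.2.1, by omega, hpq.2.2.2.2⟩
end
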